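/- Let n ≥ 2 be an integer. Then lim_{a → 0⁺} K(n,a)/a² = 1/((2n+4)·V_n); that is, K(n,a) = a²/((2n+4)·V_n) + o(a²) as a → 0⁺. -/

import Mathlib

open MeasureTheory Real Filter
open scoped RealInnerProductSpace

noncomputable def poch (x : ℝ) (k : ℕ) : ℝ := ∏ i ∈ Finset.range k, (x + i)

noncomputable def incBeta (x α β : ℝ) : ℝ := ∫ t in (0:ℝ)..x, t ^ (α - 1) * (1 - t) ^ (β - 1)

noncomputable def sphereVol (n : ℕ) : ℝ :=
  2 * Real.pi ^ (((n : ℝ) + 1) / 2) / Real.Gamma (((n : ℝ) + 1) / 2)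

noncomputable def green (n : ℕ) (t : ℝ) : ℝ :=
  2 / (n * sphereVol n) * ∑' k : ℕ,
    poch n k / (((k : ℝ) + 1) * poch ((n : ℝ) / 2 + 1) k) *
      ((1 - t ^ 2 / 4) ^ (k + 1)
        - incBeta 1 ((n : ℝ) / 2) ((n : ℝ) / 2 + k + 1) / incBeta 1 ((n : ℝ) / 2) ((n : ℝ) / 2))

noncomputable def Kfun (n : ℕ) (a : ℝ) : ℝ :=
  2 / (n * sphereVol n) * ∑' k : ℕ,
    poch n k / (poch ((n : ℝ) / 2 + 1) k * ((k : ℝ) + 1)) *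
      (incBeta (Real.sin (a / 2) ^ 2) ((n : ℝ) / 2 + k + 1) ((n : ℝ) / 2) /
        incBeta (Real.sin (a / 2) ^ 2) ((n : ℝ) / 2) ((n : ℝ) / 2))

noncomputable def ballVol (n : ℕ) (a : ℝ) : ℝ :=
  sphereVol (n - 1) * ∫ r in (0:ℝ)..a, Real.sin r ^ (n - 1)

noncomputable def sphereMeasure (n : ℕ) :
    Measure (Metric.sphere (0 : EuclideanSpace ℝ (Fin (n + 1))) 1) :=
  (volume : Measure (EuclideanSpace ℝ (Fin (n + 1)))).toSphere


/-!
Write x = sin²(a/2), so that x/a² → 1/4. The k-th term of the series is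
c_k · B_x(n/2+k+1, n/2)/B_x(n/2, n/2) with 0 ≤ c_k = (n)_k/((n/2+1)_k (k+1)) ≤ 2^k, and
since t^(k+1) ≤ x^(k+1) on [0, x] the ratio of incomplete beta functions is at most x^(k+1).
After dividing by x, dominated convergence (with bound 2^(-k) for x ≤ 1/4) leaves only the
k = 0 term, and B_x(α, β) ~ x^α/α shows that this term divided by x tends to (n/2)/(n/2+1).
Hence K(n,a)/a² → (2/(n V_n)) · (n/(n+2)) · (1/4) = 1/((2n+4) V_n).
-/

open scoped Topology

section IncBeta

variable {x α β : ℝ}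

lemma intervalIntegrable_incBeta_integrand (hα : 0 < α) (hx : 0 ≤ x) (hx1 : x < 1) :
    IntervalIntegrable (fun t => t ^ (α - 1) * (1 - t) ^ (β - 1)) volume 0 x := by
  refine (intervalIntegral.intervalIntegrable_rpow' (by linarith)).mul_continuousOn ?_
  refine (continuous_const.sub continuous_id).continuousOn.rpow_const fun t ht => ?_
  rw [Set.uIcc_of_le hx] at ht
  exact Or.inl (sub_pos.2 (ht.2.trans_lt hx1)).ne'

lemma integral_rpow_sub_one (hα : 0 < α) :
    ∫ t in (0:ℝ)..x, t ^ (α - 1) = x ^ α / α := by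
  rw [integral_rpow (Or.inl (by linarith)), sub_add_cancel, Real.zero_rpow hα.ne', sub_zero]

lemma incBeta_nonneg (hx : 0 ≤ x) (hx1 : x ≤ 1) : 0 ≤ incBeta x α β :=
  intervalIntegral.integral_nonneg hx fun t ht =>
    mul_nonneg (Real.rpow_nonneg ht.1 _) (Real.rpow_nonneg (by linarith [ht.2]) _)

lemma incBeta_le_rpow_div (hα : 0 < α) (hβ : 1 ≤ β) (hx : 0 ≤ x) (hx1 : x < 1) :
    incBeta x α β ≤ x ^ α / α := by
  rw [← integral_rpow_sub_one hα]
  refine intervalIntegral.integral_mono_on hx (intervalIntegrable_incBeta_integrand hα hx hx1)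
    (intervalIntegral.intervalIntegrable_rpow' (by linarith)) fun t ht => ?_
  exact mul_le_of_le_one_right (Real.rpow_nonneg ht.1 _)
    (Real.rpow_le_one (by linarith [ht.2]) (by linarith [ht.1]) (by linarith))

lemma one_sub_rpow_mul_rpow_div_le_incBeta (hα : 0 < α) (hβ : 1 ≤ β) (hx : 0 ≤ x)
    (hx1 : x < 1) : (1 - x) ^ (β - 1) * (x ^ α / α) ≤ incBeta x α β := by
  rw [← integral_rpow_sub_one hα, ← intervalIntegral.integral_const_mul]
  refine intervalIntegral.integral_mono_on hx
    ((intervalIntegral.intervalIntegrable_rpow' (by linarith)).const_mul _)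
    (intervalIntegrable_incBeta_integrand hα hx hx1) fun t ht => ?_
  rw [mul_comm]
  exact mul_le_mul_of_nonneg_left
    (Real.rpow_le_rpow (by linarith) (by linarith [ht.2]) (by linarith))
    (Real.rpow_nonneg ht.1 _)

lemma incBeta_pos (hα : 0 < α) (hβ : 1 ≤ β) (hx : 0 < x) (hx1 : x < 1) :
    0 < incBeta x α β :=
  lt_of_lt_of_le (by have := Real.rpow_pos_of_pos hx α; positivity)
    (one_sub_rpow_mul_rpow_div_le_incBeta hα hβ hx.le hx1)

lemma incBeta_add_nat_add_one_le (hα : 0 < α) (hx : 0 ≤ x) (hx1 : x < 1) (k : ℕ) :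
    incBeta x (α + k + 1) β ≤ x ^ (k + 1) * incBeta x α β := by
  rw [incBeta, incBeta, ← intervalIntegral.integral_const_mul]
  refine intervalIntegral.integral_mono_on hx
    (intervalIntegrable_incBeta_integrand (by positivity) hx hx1)
    ((intervalIntegrable_incBeta_integrand hα hx hx1).const_mul _) fun t ht => ?_
  have hsplit : t ^ (α + k + 1 - 1) = t ^ (k + 1) * t ^ (α - 1) := by
    have hexp : 0 < α - 1 + ((k + 1 : ℕ) : ℝ) := by
      push_cast; linarith [k.cast_nonneg' (α := ℝ)]
    rw [show α + k + 1 - 1 = α - 1 + ((k + 1 : ℕ) : ℝ) by push_cast; ring,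
      Real.rpow_add' ht.1 hexp.ne', Real.rpow_natCast, mul_comm]
  rw [hsplit, mul_assoc]
  exact mul_le_mul_of_nonneg_right (pow_le_pow_left₀ ht.1 ht.2 _)
    (mul_nonneg (Real.rpow_nonneg ht.1 _) (Real.rpow_nonneg (by linarith [ht.2]) _))

lemma incBeta_add_nat_add_one_div_le (hα : 0 < α) (hβ : 1 ≤ β) (hx : 0 < x) (hx1 : x < 1)
    (k : ℕ) : incBeta x (α + k + 1) β / incBeta x α β ≤ x ^ (k + 1) :=
  (div_le_iff₀ (incBeta_pos hα hβ hx hx1)).2 (incBeta_add_nat_add_one_le hα hx.le hx1 k)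

lemma tendsto_incBeta_div_rpow_div (hα : 0 < α) (hβ : 1 ≤ β) :
    Tendsto (fun x => incBeta x α β / (x ^ α / α)) (𝓝[>] 0) (𝓝 1) := by
  have hlow : Tendsto (fun x : ℝ => (1 - x) ^ (β - 1)) (𝓝[>] 0) (𝓝 1) := by
    have : ContinuousAt (fun x : ℝ => (1 - x) ^ (β - 1)) 0 :=
      (continuous_const.sub continuous_id).continuousAt.rpow_const (Or.inl (by norm_num))
    simpa using this.tendsto.mono_left nhdsWithin_le_nhds
  refine tendsto_of_tendsto_of_tendsto_of_le_of_le' hlow tendsto_const_nhds ?_ ?_ <;>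
    filter_upwards [Ioo_mem_nhdsGT (zero_lt_one' ℝ)] with x ⟨hx0, hx1⟩
  all_goals have hxα : 0 < x ^ α / α := div_pos (Real.rpow_pos_of_pos hx0 α) hα
  · exact (le_div_iff₀ hxα).2 (one_sub_rpow_mul_rpow_div_le_incBeta hα hβ hx0.le hx1)
  · exact (div_le_one hxα).2 (incBeta_le_rpow_div hα hβ hx0.le hx1)

lemma tendsto_incBeta_add_one_div (hα : 0 < α) (hβ : 1 ≤ β) :
    Tendsto (fun x => incBeta x (α + 1) β / incBeta x α β / x) (𝓝[>] 0)
      (𝓝 (α / (α + 1))) := by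
  have h := ((tendsto_incBeta_div_rpow_div (α := α + 1) (by linarith) hβ).div
    (tendsto_incBeta_div_rpow_div hα hβ) one_ne_zero).mul_const (α / (α + 1))
  rw [div_one, one_mul] at h
  refine h.congr' ?_
  filter_upwards [Ioo_mem_nhdsGT (zero_lt_one' ℝ)] with x ⟨hx0, hx1⟩
  have hB := (incBeta_pos hα hβ hx0 hx1).ne'
  have hxα := (Real.rpow_pos_of_pos hx0 α).ne'
  simp only [Pi.div_apply]
  rw [Real.rpow_add hx0, Real.rpow_one]
  field_simp

end IncBeta

lemma tendsto_tsum_mul_incBeta_div {α β : ℝ} {c : ℕ → ℝ} (hα : 0 < α) (hβ : 1 ≤ β)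
    (hc0 : c 0 = 1) (hc : ∀ k, |c k| ≤ 2 ^ k) :
    Tendsto (fun x => (∑' k : ℕ, c k * (incBeta x (α + k + 1) β / incBeta x α β)) / x)
      (𝓝[>] 0) (𝓝 (α / (α + 1))) := by
  have hsmall : ∀ᶠ x in 𝓝[>] (0:ℝ), x ∈ Set.Ioo 0 1 := Ioo_mem_nhdsGT (zero_lt_one' ℝ)
  have hterm : ∀ x ∈ Set.Ioo (0:ℝ) 1, ∀ k : ℕ,
      ‖c k * (incBeta x (α + k + 1) β / incBeta x α β) / x‖ ≤ 2 ^ k * x ^ k := by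
    rintro x ⟨hx0, hx1⟩ k
    have hratio := incBeta_add_nat_add_one_div_le hα hβ hx0 hx1 k
    have hratio0 : 0 ≤ incBeta x (α + k + 1) β / incBeta x α β :=
      div_nonneg (incBeta_nonneg hx0.le hx1.le) (incBeta_pos hα hβ hx0 hx1).le
    rw [Real.norm_eq_abs, abs_div, abs_mul, abs_of_nonneg hratio0, abs_of_pos hx0,
      div_le_iff₀ hx0, mul_assoc, ← pow_succ]
    exact mul_le_mul (hc k) hratio hratio0 (by positivity)
  have hlim : ∀ k : ℕ,
      Tendsto (fun x => c k * (incBeta x (α + k + 1) β / incBeta x α β) / x) (𝓝[>] 0)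
        (𝓝 (if k = 0 then α / (α + 1) else 0)) := by
    rintro (_ | k)
    · simpa [hc0] using tendsto_incBeta_add_one_div hα hβ
    · refine squeeze_zero_norm' (hsmall.mono fun x hx => hterm x hx (k + 1)) ?_
      have hid : Tendsto (fun x : ℝ => x) (𝓝[>] 0) (𝓝 0) := nhdsWithin_le_nhds
      simpa using (hid.pow (k + 1)).const_mul (2 ^ (k + 1) : ℝ)
  have hbound : ∀ᶠ x in 𝓝[>] (0:ℝ), ∀ k : ℕ,
      ‖c k * (incBeta x (α + k + 1) β / incBeta x α β) / x‖ ≤ (1 / 2) ^ k := by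
    filter_upwards [Ioo_mem_nhdsGT (by norm_num : (0:ℝ) < 1 / 4)] with x ⟨hx0, hx1⟩ k
    refine (hterm x ⟨hx0, by linarith⟩ k).trans ?_
    rw [← mul_pow]
    exact pow_le_pow_left₀ (by positivity) (by linarith) k
  have h := tendsto_tsum_of_dominated_convergence
    (summable_geometric_of_lt_one (by norm_num) (by norm_num)) hlim hbound
  rw [tsum_ite_eq 0 (fun _ => α / (α + 1))] at h
  simpa only [tsum_div_const] using h

lemma tendsto_sin_half_sq_nhdsGT :
    Tendsto (fun a : ℝ => Real.sin (a / 2) ^ 2) (𝓝[>] 0) (𝓝[>] 0) := by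
  refine tendsto_nhdsWithin_iff.2 ⟨?_, ?_⟩
  · have : Continuous (fun a : ℝ => Real.sin (a / 2) ^ 2) := by fun_prop
    simpa using this.continuousAt.tendsto.mono_left (nhdsWithin_le_nhds (a := (0:ℝ)))
  · filter_upwards [Ioo_mem_nhdsGT Real.two_pi_pos] with a ⟨ha0, ha⟩
    have := Real.sin_pos_of_pos_of_lt_pi (half_pos ha0) (by linarith)
    exact pow_pos this 2

lemma tendsto_sin_half_sq_div_sq :
    Tendsto (fun a : ℝ => Real.sin (a / 2) ^ 2 / a ^ 2) (𝓝[>] 0) (𝓝 (1 / 4)) := by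
  have hcont : Continuous (fun a : ℝ => Real.sinc (a / 2) ^ 2 / 4) := by
    have := Real.continuous_sinc; fun_prop
  have h := hcont.continuousAt.tendsto.mono_left
    (nhdsWithin_le_nhds (a := (0:ℝ)) (s := Set.Ioi 0))
  simp only [zero_div, Real.sinc_zero, one_pow] at h
  refine h.congr' ?_
  filter_upwards [self_mem_nhdsWithin] with a (ha : 0 < a)
  rw [Real.sinc_of_ne_zero (by positivity)]
  field_simp
  ring

section Pochhammer

variable {x : ℝ}

lemma poch_pos (hx : 0 < x) (k : ℕ) : 0 < poch x k :=
  Finset.prod_pos fun i _ => by positivity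

lemma poch_le_two_pow_mul (hx : 0 ≤ x) (k : ℕ) : poch x k ≤ 2 ^ k * poch (x / 2 + 1) k :=
  calc poch x k ≤ ∏ i ∈ Finset.range k, 2 * (x / 2 + 1 + i) :=
        Finset.prod_le_prod (fun i _ => by positivity) fun i _ => by linarith
    _ = 2 ^ k * poch (x / 2 + 1) k := by
        rw [Finset.prod_mul_distrib, Finset.prod_const, Finset.card_range, poch]

lemma abs_poch_div_poch_half_add_one_le (hx : 0 ≤ x) (k : ℕ) :
    |poch x k / (poch (x / 2 + 1) k * ((k : ℝ) + 1))| ≤ 2 ^ k := by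
  have hq := poch_pos (by positivity : 0 < x / 2 + 1) k
  rw [abs_of_nonneg (div_nonneg (Finset.prod_nonneg fun i _ => by positivity) (by positivity)),
    div_le_iff₀ (by positivity)]
  calc poch x k ≤ 2 ^ k * poch (x / 2 + 1) k := poch_le_two_pow_mul hx k
    _ ≤ 2 ^ k * (poch (x / 2 + 1) k * ((k : ℝ) + 1)) := by
      gcongr; exact le_mul_of_one_le_right hq.le (by linarith [k.cast_nonneg' (α := ℝ)])

end Pochhammer

lemma sphereVol_pos (n : ℕ) : 0 < sphereVol n :=
  div_pos (by positivity) (Real.Gamma_pos_of_pos (by positivity))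

theorem stmt_11 (n : ℕ) (hn : 2 ≤ n) :
    Tendsto (fun a : ℝ => Kfun n a / a ^ 2) (nhdsWithin 0 (Set.Ioi 0))
      (nhds (1 / ((2 * (n : ℝ) + 4) * sphereVol n))) := by
  have hq : 1 ≤ (n : ℝ) / 2 := by
    rw [le_div_iff₀ two_pos, one_mul]; exact_mod_cast hn
  have hV := sphereVol_pos n
  have hseries := (tendsto_tsum_mul_incBeta_div (by linarith : (0 : ℝ) < n / 2) hq
    (by simp [poch]) (abs_poch_div_poch_half_add_one_le n.cast_nonneg)).comp
    tendsto_sin_half_sq_nhdsGT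
  have h := (hseries.mul tendsto_sin_half_sq_div_sq).const_mul (2 / (n * sphereVol n))
  convert h.congr' ?_ using 2
  · field_simp
    ring
  filter_upwards [Ioo_mem_nhdsGT Real.two_pi_pos] with a ⟨ha0, ha⟩
  have hx := Real.sin_pos_of_pos_of_lt_pi (half_pos ha0) (by linarith)
  rw [Function.comp_apply, div_mul_div_cancel₀ (pow_pos hx 2).ne', Kfun, mul_div_assoc]
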